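/- arXiv:2308.03115 — 2 statements merged into one kernel-verified Lean document; each statement's English description precedes it below -/
import Mathlib

section
/- Let G_N be the graph with vertex set {v_1,...,v_N, u_1,...,u_N}, where the v_i form a complete graph and each u_i is joined to v_i by a single edge. Fix positive weights μ_1,...,μ_N on the interior vertices v_i. Then for any sequence of real numbers 0 < λ_1 < λ_2 ≤ ... ≤ λ_N, there exist positive edge weights θ_{ij} (for i<j) and θ_i such that the combinatorial Dirichlet Laplacian Δ_Θ, defined on functions vanishing at the boundary vertices u_i by (Δ_Θ f)(v_i) = (1/μ_i) Σ_{j≠i} θ_{ij}(f(v_i)-f(v_j)) + (θ_i/μ_i) f(v_i), has eigenvalues exactly λ_1,...,λ_N (with multiplicity). -/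
/-!
Taking boundary weights `θ_i = λ₁ μ_i` makes the constants an eigenfunction for `λ₁`, so one may
prescribe a `μ`-orthonormal eigenbasis and read the interior weights off the operator
`∑ₖ λₖ ψₖ ⟨ψₖ, ·⟩_μ`: if `K` is its kernel, `θ_ij = -μ_i μ_j K_ij`. The basis is the constant
function together with the Helmert vectors (`1` above a pivot, negative at it, `0` below), those
with larger support carrying smaller eigenvalues. This ordering is what makes `K_ij < 0` for
`i ≠ j`, i.e. all weights positive.
-/

open Finset

namespace WeightedSpectrum

section Kernel

variable {ι κ : Type*} [Fintype κ]

def spectralKernel (a : κ → ℝ) (ψ : κ → ι → ℝ) (i j : ι) : ℝ := ∑ l, a l * ψ l i * ψ l j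

lemma spectralKernel_comm (a : κ → ℝ) (ψ : κ → ι → ℝ) (i j : ι) :
    spectralKernel a ψ i j = spectralKernel a ψ j i :=
  sum_congr rfl fun _ _ => by ring

end Kernel

section Weighted

variable {ι κ : Type*} [Fintype ι]

def weightedInner (μ f g : ι → ℝ) : ℝ := ∑ i, μ i * f i * g i

def WeightedOrthonormal (μ : ι → ℝ) (ψ : κ → ι → ℝ) [DecidableEq κ] : Prop :=
  ∀ k l, weightedInner μ (ψ k) (ψ l) = if k = l then 1 else 0

noncomputable def weightedNormalize (μ f : ι → ℝ) : ι → ℝ :=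
  fun i => f i / √(weightedInner μ f f)

lemma weightedInner_comm (μ f g : ι → ℝ) : weightedInner μ f g = weightedInner μ g f :=
  sum_congr rfl fun _ _ => by ring

lemma weightedInner_self_nonneg {μ : ι → ℝ} (hμ : ∀ i, 0 ≤ μ i) (f : ι → ℝ) :
    0 ≤ weightedInner μ f f :=
  sum_nonneg fun i _ => by rw [mul_assoc]; exact mul_nonneg (hμ i) (mul_self_nonneg _)

lemma weightedInner_self_pos {μ f : ι → ℝ} (hμ : ∀ i, 0 < μ i) {i : ι} (hf : f i ≠ 0) :
    0 < weightedInner μ f f :=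
  sum_pos' (fun j _ => by rw [mul_assoc]; exact mul_nonneg (hμ j).le (mul_self_nonneg _))
    ⟨i, mem_univ i, by rw [mul_assoc]; exact mul_pos (hμ i) (mul_self_pos.2 hf)⟩

lemma weightedInner_weightedNormalize (μ f g : ι → ℝ) :
    weightedInner μ (weightedNormalize μ f) (weightedNormalize μ g)
      = weightedInner μ f g / (√(weightedInner μ f f) * √(weightedInner μ g g)) := by
  rw [weightedInner, weightedInner, sum_div]
  exact sum_congr rfl fun _ _ => by simp only [weightedNormalize]; ring

lemma weightedNormalize_mul_weightedNormalize {μ f : ι → ℝ}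
    (hf : 0 ≤ weightedInner μ f f) (i j : ι) :
    weightedNormalize μ f i * weightedNormalize μ f j = f i * f j / weightedInner μ f f := by
  rw [weightedNormalize, weightedNormalize, div_mul_div_comm, Real.mul_self_sqrt hf]

lemma weightedOrthonormal_weightedNormalize [DecidableEq κ] {μ : ι → ℝ} {v : κ → ι → ℝ}
    (horth : Pairwise fun k l => weightedInner μ (v k) (v l) = 0)
    (hpos : ∀ k, 0 < weightedInner μ (v k) (v k)) :
    WeightedOrthonormal μ fun k => weightedNormalize μ (v k) := by
  intro k l
  rw [weightedInner_weightedNormalize]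
  split_ifs with hkl
  · subst hkl
    rw [Real.mul_self_sqrt (hpos k).le, div_self (hpos k).ne']
  · rw [horth hkl, zero_div]

/-- Orthonormal columns of a square matrix force orthonormal rows. -/
lemma WeightedOrthonormal.sum_mul_eq_zero [DecidableEq ι] {μ : ι → ℝ} {ψ : ι → ι → ℝ}
    (hψ : WeightedOrthonormal μ ψ) {i j : ι} (hμ : μ j ≠ 0) (hij : i ≠ j) :
    ∑ l, ψ l i * ψ l j = 0 := by
  let P : Matrix ι ι ℝ := Matrix.of ψ
  have hP : P * Matrix.diagonal μ * P.transpose = 1 := by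
    ext k l
    rw [Matrix.mul_apply, Matrix.one_apply, ← hψ k l]
    exact sum_congr rfl fun _ _ => by
      simp only [P, Matrix.mul_diagonal, Matrix.transpose_apply, Matrix.of_apply]; ring
  have hPt : P.transpose * (P * Matrix.diagonal μ) = 1 := mul_eq_one_comm.1 hP
  have hentry := congrFun (congrFun hPt i) j
  rw [Matrix.mul_apply, Matrix.one_apply_ne hij] at hentry
  simp only [P, Matrix.mul_diagonal, Matrix.transpose_apply, Matrix.of_apply, ← mul_assoc,
    ← sum_mul] at hentry
  exact (mul_eq_zero.1 hentry).resolve_right hμ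

lemma WeightedOrthonormal.sum_spectralKernel_mul [Fintype κ] [DecidableEq κ] {μ : ι → ℝ}
    {ψ : κ → ι → ℝ} (hψ : WeightedOrthonormal μ ψ) (a : κ → ℝ) (m : κ) (i : ι) :
    ∑ j, μ j * spectralKernel a ψ i j * ψ m j = a m * ψ m i := by
  calc ∑ j, μ j * spectralKernel a ψ i j * ψ m j
      = ∑ l, a l * ψ l i * weightedInner μ (ψ l) (ψ m) := by
        simp only [spectralKernel, weightedInner, mul_sum, sum_mul]
        rw [sum_comm]
        exact sum_congr rfl fun _ _ => sum_congr rfl fun _ _ => by ring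
    _ = a m * ψ m i := by simp [hψ _ m]

noncomputable def dirichletLaplacian [DecidableEq ι] (μ θb : ι → ℝ) (θ : ι → ι → ℝ)
    (f : ι → ℝ) (i : ι) : ℝ :=
  (1 / μ i) * (∑ j ∈ univ.filter (fun j => j ≠ i), θ i j * (f i - f j)) + (θb i / μ i) * f i

lemma dirichletLaplacian_eq_sum [DecidableEq ι] {μ : ι → ℝ} {K : ι → ι → ℝ} {c : ℝ} {i : ι}
    (hμ : μ i ≠ 0) (hrow : ∑ j, μ j * K i j = c) (f : ι → ℝ) :
    dirichletLaplacian μ (fun i => c * μ i) (fun i j => -(μ i * μ j * K i j)) f i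
      = ∑ j, μ j * K i j * f j := by
  have hfull : ∑ j ∈ univ.filter (fun j => j ≠ i), -(μ i * μ j * K i j) * (f i - f j)
      = μ i * (∑ j, μ j * K i j * f j) - μ i * f i * ∑ j, μ j * K i j := by
    rw [filter_ne', sum_erase _ (by simp), mul_sum, mul_sum, ← sum_sub_distrib]
    exact sum_congr rfl fun _ _ => by ring
  rw [dirichletLaplacian, hfull, hrow]
  field_simp
  ring

end Weighted

section Helmert

variable {ι : Type*} [Fintype ι] [LinearOrder ι]

def tailMass (μ : ι → ℝ) (p : ι) : ℝ := ∑ i ∈ univ.filter (p < ·), μ i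

/-- The value at the pivot `p` makes it `μ`-orthogonal to the constants. -/
noncomputable def helmert (μ : ι → ℝ) (p i : ι) : ℝ :=
  if p < i then 1 else if i = p then -tailMass μ p / μ p else 0

lemma helmert_apply_eq_one (μ : ι → ℝ) {p i : ι} (h : p < i) : helmert μ p i = 1 :=
  if_pos h

lemma helmert_apply_eq_zero (μ : ι → ℝ) {p i : ι} (h : i < p) : helmert μ p i = 0 := by
  rw [helmert, if_neg h.not_gt, if_neg h.ne]

lemma weightedInner_one_helmert {μ : ι → ℝ} {p : ι} (hμ : μ p ≠ 0) :
    weightedInner μ 1 (helmert μ p) = 0 := by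
  have hterm : ∀ i, μ i * (1 : ι → ℝ) i * helmert μ p i
      = (if p < i then μ i else 0) + (if i = p then -tailMass μ p else 0) := by
    intro i
    rcases lt_trichotomy p i with h | rfl | h
    · simp [helmert, h, h.ne']
    · simp only [helmert, lt_irrefl, if_false, if_true, Pi.one_apply, zero_add]
      field_simp
    · simp [helmert, h.not_gt, h.ne]
  rw [weightedInner, sum_congr rfl fun i _ => hterm i, sum_add_distrib, ← sum_filter,
    sum_ite_eq', if_pos (mem_univ _), tailMass, add_neg_cancel]

lemma weightedInner_helmert_of_lt {μ : ι → ℝ} {p q : ι} (hμ : μ q ≠ 0) (hpq : p < q) :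
    weightedInner μ (helmert μ p) (helmert μ q) = 0 := by
  rw [← weightedInner_one_helmert hμ]
  refine sum_congr rfl fun i _ => ?_
  rcases lt_or_ge i q with h | h
  · rw [helmert_apply_eq_zero μ h, mul_zero, mul_zero]
  · rw [helmert_apply_eq_one μ (hpq.trans_le h), Pi.one_apply]

lemma weightedInner_helmert_of_ne {μ : ι → ℝ} (hμ : ∀ i, μ i ≠ 0) {p q : ι} (hpq : p ≠ q) :
    weightedInner μ (helmert μ p) (helmert μ q) = 0 := by
  rcases hpq.lt_or_gt with h | h
  · exact weightedInner_helmert_of_lt (hμ q) h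
  · rw [weightedInner_comm]; exact weightedInner_helmert_of_lt (hμ p) h

end Helmert

section HelmertBasis

variable {n : ℕ} {μ : Fin (n + 1) → ℝ}

noncomputable def helmertFamily (μ : Fin (n + 1) → ℝ) : Fin (n + 1) → Fin (n + 1) → ℝ :=
  Fin.cons 1 fun k => helmert μ k.castSucc

noncomputable def helmertBasis (μ : Fin (n + 1) → ℝ) : Fin (n + 1) → Fin (n + 1) → ℝ :=
  fun l => weightedNormalize μ (helmertFamily μ l)

lemma pairwise_weightedInner_helmertFamily (hμ : ∀ i, μ i ≠ 0) :
    Pairwise fun k l => weightedInner μ (helmertFamily μ k) (helmertFamily μ l) = 0 := by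
  intro k l hkl
  induction k using Fin.cases with
  | zero =>
    induction l using Fin.cases with
    | zero => exact absurd rfl hkl
    | succ l => exact weightedInner_one_helmert (hμ _)
  | succ k =>
    induction l using Fin.cases with
    | zero =>
      rw [weightedInner_comm]
      exact weightedInner_one_helmert (hμ _)
    | succ l =>
      exact weightedInner_helmert_of_ne hμ
        (Fin.castSucc_injective _ |>.ne (Fin.succ_injective _ |>.ne_iff.1 hkl))

lemma weightedInner_helmertFamily_self_pos (hμ : ∀ i, 0 < μ i) (k : Fin (n + 1)) :
    0 < weightedInner μ (helmertFamily μ k) (helmertFamily μ k) := by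
  induction k using Fin.cases with
  | zero => exact weightedInner_self_pos hμ (i := 0) one_ne_zero
  | succ k =>
    refine weightedInner_self_pos hμ (i := k.succ) ?_
    simp [helmertFamily, helmert_apply_eq_one μ Fin.castSucc_lt_succ]

lemma weightedOrthonormal_helmertBasis (hμ : ∀ i, 0 < μ i) :
    WeightedOrthonormal μ (helmertBasis μ) :=
  weightedOrthonormal_weightedNormalize (pairwise_weightedInner_helmertFamily fun i => (hμ i).ne')
    (weightedInner_helmertFamily_self_pos hμ)

lemma sum_weight_mul_spectralKernel_helmertBasis (hμ : ∀ i, 0 < μ i) (a : Fin (n + 1) → ℝ)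
    (i : Fin (n + 1)) : ∑ j, μ j * spectralKernel a (helmertBasis μ) i j = a 0 := by
  have heig := (weightedOrthonormal_helmertBasis hμ).sum_spectralKernel_mul a 0 i
  have hconst : ∀ j, helmertBasis μ 0 j = (√(weightedInner μ 1 1))⁻¹ := fun j => by
    simp [helmertBasis, helmertFamily, weightedNormalize]
  have hne : (√(weightedInner μ 1 1))⁻¹ ≠ 0 :=
    inv_ne_zero (Real.sqrt_pos.2 (weightedInner_self_pos hμ (i := 0) one_ne_zero)).ne'
  simp only [hconst, ← sum_mul] at heig
  exact mul_right_cancel₀ hne heig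

/-- Off the diagonal `∑ l, ψ l i * ψ l j = 0`, so the kernel equals
`-∑ l, (a k₀.succ - a l) * ψ l i * ψ l j`: every term of this sum is `≥ 0` by monotonicity and the
support of the Helmert vectors, and the one of the constant eigenvector is `> 0`. -/
lemma spectralKernel_helmertBasis_neg_of_castSucc_lt (hμ : ∀ i, 0 < μ i)
    {a : Fin (n + 1) → ℝ} (hmono : Monotone a) (hstrict : ∀ k, k ≠ 0 → a 0 < a k)
    {k₀ : Fin n} {j : Fin (n + 1)} (hj : k₀.castSucc < j) :
    spectralKernel a (helmertBasis μ) k₀.castSucc j < 0 := by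
  set i := k₀.castSucc
  set ψ := helmertBasis μ
  set v := helmertFamily μ
  have hcompl : ∑ l, ψ l i * ψ l j = 0 :=
    (weightedOrthonormal_helmertBasis hμ).sum_mul_eq_zero (hμ j).ne' hj.ne
  have hprod : ∀ l, ψ l i * ψ l j = v l i * v l j / weightedInner μ (v l) (v l) := fun l =>
    weightedNormalize_mul_weightedNormalize (weightedInner_self_nonneg (fun i => (hμ i).le) _) i j
  have hterm : ∀ l, 0 ≤ (a k₀.succ - a l) * (v l i * v l j) := by
    intro l
    induction l using Fin.cases with
    | zero => simpa [v, helmertFamily] using (hstrict _ (Fin.succ_ne_zero k₀)).le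
    | succ k =>
      simp only [v, helmertFamily, Fin.cons_succ]
      rcases lt_trichotomy k k₀ with h | rfl | h
      · have hki : k.castSucc < i := Fin.castSucc_lt_castSucc_iff.2 h
        rw [helmert_apply_eq_one μ hki, helmert_apply_eq_one μ (hki.trans hj), mul_one, mul_one]
        exact sub_nonneg.2 (hmono (Fin.succ_le_succ_iff.2 h.le))
      · rw [sub_self, zero_mul]
      · rw [helmert_apply_eq_zero μ (Fin.castSucc_lt_castSucc_iff.2 h), zero_mul, mul_zero]
  have hpos : 0 < ∑ l, (a k₀.succ - a l) * (ψ l i * ψ l j) := by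
    refine sum_pos' (fun l _ => ?_) ⟨0, mem_univ _, ?_⟩
    · rw [hprod, ← mul_div_assoc]
      exact div_nonneg (hterm l) (weightedInner_self_nonneg (fun i => (hμ i).le) _)
    · rw [hprod, ← mul_div_assoc]
      refine div_pos ?_ (weightedInner_helmertFamily_self_pos hμ 0)
      simpa [v, helmertFamily] using hstrict _ (Fin.succ_ne_zero k₀)
  calc spectralKernel a ψ i j
      = a k₀.succ * ∑ l, ψ l i * ψ l j - ∑ l, (a k₀.succ - a l) * (ψ l i * ψ l j) := by
        rw [spectralKernel, mul_sum, ← sum_sub_distrib]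
        exact sum_congr rfl fun _ _ => by ring
    _ < 0 := by rw [hcompl, mul_zero, zero_sub, neg_neg_iff_pos]; exact hpos

lemma spectralKernel_helmertBasis_neg (hμ : ∀ i, 0 < μ i) {a : Fin (n + 1) → ℝ}
    (hmono : Monotone a) (hstrict : ∀ k, k ≠ 0 → a 0 < a k) {i j : Fin (n + 1)} (hij : i ≠ j) :
    spectralKernel a (helmertBasis μ) i j < 0 := by
  wlog hlt : i < j generalizing i j
  · rw [spectralKernel_comm]
    exact this hij.symm ((Ne.lt_or_gt hij).resolve_left hlt)
  obtain ⟨k₀, rfl⟩ := Fin.exists_castSucc_eq.2 (Fin.ne_last_of_lt hlt)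
  exact spectralKernel_helmertBasis_neg_of_castSucc_lt hμ hmono hstrict hlt

end HelmertBasis

end WeightedSpectrum

open WeightedSpectrum

/-- prescribing the Dirichlet spectrum of the combinatorial Laplacian on
the graph `G_N` (complete graph on interior vertices `v_1, …, v_N`, with one boundary
vertex `u_i` attached to each `v_i`).  Functions vanish at the boundary vertices, so the
Dirichlet Laplacian acts on `ℝ^N` (values at interior vertices), with the weighted inner
product `⟨f,g⟩ = ∑ μ_i f(v_i) g(v_i)`.  Eigenvalues (with multiplicity) are encoded via a
`μ`-orthonormal eigenbasis. -/
theorem stmt_0 (N : ℕ) (hN : 0 < N) (μ : Fin N → ℝ) (hμ : ∀ i, 0 < μ i)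
    (a : Fin N → ℝ) (hmono : Monotone a) (ha0 : 0 < a ⟨0, hN⟩)
    (hstrict : ∀ k : Fin N, k ≠ ⟨0, hN⟩ → a ⟨0, hN⟩ < a k) :
    ∃ (θ : Fin N → Fin N → ℝ) (θb : Fin N → ℝ),
      (∀ i j, θ i j = θ j i) ∧ (∀ i j, i ≠ j → 0 < θ i j) ∧ (∀ i, 0 < θb i) ∧
      ∃ ψ : Fin N → Fin N → ℝ,
        (∀ k l, (∑ i, μ i * ψ k i * ψ l i) = if k = l then 1 else 0) ∧
        (∀ k i, (1 / μ i) * (∑ j ∈ Finset.univ.filter (fun j => j ≠ i),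
              θ i j * (ψ k i - ψ k j))
            + (θb i / μ i) * ψ k i = a k * ψ k i) := by
  obtain ⟨n, rfl⟩ := Nat.exists_eq_add_one_of_ne_zero hN.ne'
  simp only [Fin.mk_zero] at ha0 hstrict
  have hψ := weightedOrthonormal_helmertBasis hμ
  set K := spectralKernel a (helmertBasis μ)
  refine ⟨fun i j => -(μ i * μ j * K i j), fun i => a 0 * μ i, fun i j => ?_, fun i j hij => ?_,
    fun i => mul_pos ha0 (hμ i), helmertBasis μ, hψ, fun k i => ?_⟩
  · simp only [K, spectralKernel_comm a _ i j]; ring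
  · exact neg_pos.2 (mul_neg_of_pos_of_neg (mul_pos (hμ i) (hμ j))
      (spectralKernel_helmertBasis_neg hμ hmono hstrict hij))
  · exact (dirichletLaplacian_eq_sum (hμ i).ne'
      (sum_weight_mul_spectralKernel_helmertBasis hμ a i) _).trans
      (hψ.sum_spectralKernel_mul a k i)
end

section
/- For fixed l > 0 and a ∈ ℝ, let f^ε_{a0}(x) = a·δ^ε·arcsin(tanh x) with δ^ε = −(arcsin(tanh a^ε))^{-1}, a^ε = arccosh(l/(πε)). Then lim_{ε→0} ∫_0^1 ∫_{−a^ε}^0 (f^ε_{a0}(x))² · πε cosh x dx dθ = l·a². -/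
/-- `arcosh y = log (y + √(y² − 1))` for `y ≥ 1`. -/
noncomputable def arcosh (y : ℝ) : ℝ := Real.log (y + Real.sqrt (y ^ 2 - 1))

/-- `a^ε = arccosh(l/(πε))`. -/
noncomputable def aeps (l ε : ℝ) : ℝ := arcosh (l / (Real.pi * ε))

/-- `δ^ε = −(arcsin(tanh a^ε))⁻¹`. -/
noncomputable def deps (l ε : ℝ) : ℝ := -(Real.arcsin (Real.tanh (aeps l ε)))⁻¹

/-! With `A = a^ε` we have `πε = l / cosh A`, and the integrand is even, so the mass is
`a² l (arcsin (tanh A))⁻² · (∫₀^A arcsin (tanh x)² cosh x dx) / cosh A`. Jordan's inequality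
at `θ = arccos (tanh x)`, where `sin θ = 1 / cosh x`, bounds `((π/2)² − arcsin (tanh x)²) cosh x`
by a constant, so the integral is `(π/2)² sinh A + O(A)` and the ratio tends to `(π/2)²`, which
cancels the limit `(π/2)⁻²` of `(δ^ε)²` as `A → ∞`. -/

open Real Filter Topology

namespace Real

theorem continuous_tanh : Continuous tanh := by
  rw [show tanh = fun x => sinh x / cosh x from funext tanh_eq_sinh_div_cosh]
  exact continuous_sinh.div continuous_cosh fun x => (cosh_pos x).ne'

theorem tanh_nonneg {x : ℝ} (hx : 0 ≤ x) : 0 ≤ tanh x := by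
  rw [tanh_eq_sinh_div_cosh]
  exact div_nonneg (sinh_nonneg_iff.2 hx) (cosh_pos x).le

theorem tendsto_tanh_atTop : Tendsto tanh atTop (𝓝 1) := by
  have hgap : ∀ x, 1 - tanh x = exp (-x) / cosh x := fun x => by
    rw [tanh_eq_sinh_div_cosh, ← cosh_sub_sinh, sub_div, div_self (cosh_pos x).ne']
  have hgap_lim : Tendsto (fun x => exp (-x) / cosh x) atTop (𝓝 0) :=
    squeeze_zero (fun x => by positivity) (fun x => div_le_self (exp_pos _).le (one_le_cosh x))
      tendsto_exp_neg_atTop_nhds_zero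
  simpa [← hgap] using (tendsto_const_nhds (x := (1 : ℝ))).sub hgap_lim

theorem tendsto_arcsin_tanh_atTop : Tendsto (fun x => arcsin (tanh x)) atTop (𝓝 (π / 2)) :=
  arcsin_one ▸ (continuous_arcsin.tendsto 1).comp tendsto_tanh_atTop

theorem sin_arccos_tanh (x : ℝ) : sin (arccos (tanh x)) = (cosh x)⁻¹ := by
  have hsq : 1 - tanh x ^ 2 = (cosh x)⁻¹ ^ 2 := by
    rw [tanh_eq_sinh_div_cosh]
    field_simp
    linarith [cosh_sq x]
  rw [sin_arccos, hsq, sqrt_sq (inv_nonneg.2 (cosh_pos x).le)]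

theorem arccos_tanh_mul_cosh_le {x : ℝ} (hx : 0 ≤ x) : arccos (tanh x) * cosh x ≤ π / 2 := by
  have hjordan := mul_le_sin (arccos_nonneg _) (arccos_le_pi_div_two.2 (tanh_nonneg hx))
  rw [sin_arccos_tanh] at hjordan
  calc arccos (tanh x) * cosh x = π / 2 * (2 / π * arccos (tanh x) * cosh x) := by
        field_simp
    _ ≤ π / 2 * ((cosh x)⁻¹ * cosh x) := by gcongr
    _ = π / 2 := by rw [inv_mul_cancel₀ (cosh_pos x).ne', mul_one]

theorem abs_sq_sub_arcsin_tanh_sq_mul_cosh_le {x : ℝ} (hx : 0 ≤ x) :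
    |((π / 2) ^ 2 - arcsin (tanh x) ^ 2) * cosh x| ≤ π ^ 2 / 2 := by
  have hfactor : ((π / 2) ^ 2 - arcsin (tanh x) ^ 2) * cosh x
      = arccos (tanh x) * cosh x * (π / 2 + arcsin (tanh x)) := by
    rw [arccos_eq_pi_div_two_sub_arcsin]; ring
  have hfirst : 0 ≤ arccos (tanh x) * cosh x := mul_nonneg (arccos_nonneg _) (cosh_pos x).le
  have hsecond : 0 ≤ π / 2 + arcsin (tanh x) := by linarith [neg_pi_div_two_le_arcsin (tanh x)]
  rw [hfactor, abs_of_nonneg (mul_nonneg hfirst hsecond)]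
  calc _ ≤ π / 2 * π := mul_le_mul (arccos_tanh_mul_cosh_le hx)
          (by linarith [arcsin_le_pi_div_two (tanh x)]) hsecond (by positivity)
    _ = π ^ 2 / 2 := by ring

theorem tendsto_div_cosh_atTop : Tendsto (fun x => x / cosh x) atTop (𝓝 0) := by
  have hbound : Tendsto (fun x => 2 * (x ^ 1 * exp (-x))) atTop (𝓝 0) := by
    simpa using (tendsto_pow_mul_exp_neg_atTop_nhds_zero 1).const_mul 2
  refine squeeze_zero' ?_ ?_ hbound
  · filter_upwards [eventually_ge_atTop 0] with x hx
    exact div_nonneg hx (cosh_pos x).le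
  · filter_upwards [eventually_ge_atTop 0] with x hx
    rw [div_le_iff₀ (cosh_pos x), cosh_eq, pow_one]
    have : exp (-x) * exp x = 1 := by rw [← exp_add, neg_add_cancel, exp_zero]
    nlinarith [mul_nonneg hx (exp_pos (-x)).le, exp_pos (-x)]

theorem tendsto_arcosh_atTop : Tendsto arcosh atTop atTop := by
  refine tendsto_atTop_mono' _ ?_ tendsto_log_atTop
  filter_upwards [eventually_gt_atTop 0] with y hy
  exact log_le_log hy (le_add_of_nonneg_right (sqrt_nonneg _))

end Real

theorem integral_cosh (a b : ℝ) : ∫ x in a..b, cosh x = sinh b - sinh a :=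
  intervalIntegral.integral_eq_sub_of_hasDerivAt (fun x _ => hasDerivAt_sinh x)
    (continuous_cosh.intervalIntegrable a b)

theorem intervalIntegral.integral_neg_zero_of_even {E : Type*} [NormedAddCommGroup E]
    [NormedSpace ℝ E] {f : ℝ → E} (hf : f.Even) (A : ℝ) :
    ∫ x in -A..0, f x = ∫ x in 0..A, f x := by
  simpa [hf _] using (integral_comp_neg (a := 0) (b := A) f).symm

theorem tendsto_integral_mul_cosh_div_cosh {f : ℝ → ℝ} {L C : ℝ} (hf : Continuous f)
    (hbound : ∀ x, 0 ≤ x → |(L - f x) * cosh x| ≤ C) :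
    Tendsto (fun A => (∫ x in 0..A, f x * cosh x) / cosh A) atTop (𝓝 L) := by
  set E := fun A => ∫ x in 0..A, (L - f x) * cosh x
  have hsplit : ∀ A, (∫ x in 0..A, f x * cosh x) / cosh A = L * tanh A - E A / cosh A := by
    intro A
    have hE : E A = L * sinh A - ∫ x in 0..A, f x * cosh x := by
      simp only [E, sub_mul]
      rw [intervalIntegral.integral_sub (f := fun x => L * cosh x) (g := fun x => f x * cosh x)
        ((continuous_const.mul continuous_cosh).intervalIntegrable _ _)
        ((hf.mul continuous_cosh).intervalIntegrable _ _), intervalIntegral.integral_const_mul,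
        integral_cosh, sinh_zero, sub_zero]
    rw [hE, tanh_eq_sinh_div_cosh]
    field_simp
    ring
  have hE_lim : Tendsto (fun A => E A / cosh A) atTop (𝓝 0) := by
    refine squeeze_zero_norm' ?_ (by simpa using tendsto_div_cosh_atTop.const_mul C)
    filter_upwards [eventually_ge_atTop 0] with A hA
    have hEA : ‖E A‖ ≤ C * |A - 0| := intervalIntegral.norm_integral_le_of_norm_le_const
      fun x hx => hbound x (by rw [Set.uIoc_of_le hA] at hx; exact hx.1.le)
    rw [sub_zero, abs_of_nonneg hA] at hEA
    rw [norm_div, Real.norm_of_nonneg (cosh_pos A).le, ← mul_div_assoc]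
    gcongr
  simpa [hsplit] using (tendsto_tanh_atTop.const_mul L).sub hE_lim

-- The `arcosh` of the definitions is `Real.arcosh` by unfolding, which the next proofs use.
theorem tendsto_aeps_nhdsGT_zero {l : ℝ} (hl : 0 < l) : Tendsto (aeps l) (𝓝[>] 0) atTop := by
  have hratio : Tendsto (fun ε => l / (π * ε)) (𝓝[>] 0) atTop :=
    (tendsto_inv_nhdsGT_zero.const_mul_atTop (div_pos hl pi_pos)).congr fun ε => by ring
  exact tendsto_arcosh_atTop.comp hratio

theorem cosh_aeps {l ε : ℝ} (hε : 0 < ε) (hεl : π * ε ≤ l) : cosh (aeps l ε) = l / (π * ε) :=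
  cosh_arcosh ((one_le_div (by positivity)).2 hεl)

theorem integral_eq_mul_integral_div_cosh_aeps {l a ε : ℝ} (hε : 0 < ε) (hεl : π * ε ≤ l) :
    ∫ x in (-(aeps l ε))..0, (a * deps l ε * arcsin (tanh x)) ^ 2 * (π * ε * cosh x)
      = a ^ 2 * l * (arcsin (tanh (aeps l ε)))⁻¹ ^ 2 *
        ((∫ x in 0..aeps l ε, arcsin (tanh x) ^ 2 * cosh x) / cosh (aeps l ε)) := by
  have heven : Function.Even fun x => arcsin (tanh x) ^ 2 * cosh x := fun x => by
    simp only [tanh_neg, arcsin_neg, neg_sq, cosh_neg]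
  calc
    _ = a ^ 2 * deps l ε ^ 2 * (π * ε) *
        ∫ x in (-aeps l ε)..0, arcsin (tanh x) ^ 2 * cosh x := by
      rw [← intervalIntegral.integral_const_mul]
      congr 1
      funext x
      ring
    _ = _ := by
      have hl : 0 < l := (mul_pos pi_pos hε).trans_le hεl
      rw [intervalIntegral.integral_neg_zero_of_even heven, cosh_aeps hε hεl, deps]
      field_simp

/-- The `θ`-integral over `ℝ/ℤ` contributes a factor `1` and is omitted. -/
theorem stmt_6 (l a : ℝ) (hl : 0 < l) :
    Filter.Tendsto
      (fun ε : ℝ => ∫ x in (-(aeps l ε))..0,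
        (a * deps l ε * Real.arcsin (Real.tanh x)) ^ 2 * (Real.pi * ε * Real.cosh x))
      (nhdsWithin 0 (Set.Ioi 0)) (nhds (l * a ^ 2)) := by
  have hratio := tendsto_integral_mul_cosh_div_cosh (f := fun x => arcsin (tanh x) ^ 2)
    ((continuous_arcsin.comp continuous_tanh).pow 2) fun _ => abs_sq_sub_arcsin_tanh_sq_mul_cosh_le
  have hlim : Tendsto (fun A => a ^ 2 * l * (arcsin (tanh A))⁻¹ ^ 2 *
      ((∫ x in 0..A, arcsin (tanh x) ^ 2 * cosh x) / cosh A)) atTop (𝓝 (l * a ^ 2)) := by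
    convert (tendsto_const_nhds.mul ((tendsto_arcsin_tanh_atTop.inv₀ (by positivity)).pow 2)).mul
      hratio using 2
    field_simp
  refine (tendsto_congr' ?_).2 (hlim.comp (tendsto_aeps_nhdsGT_zero hl))
  filter_upwards [Ioo_mem_nhdsGT (div_pos hl pi_pos)] with ε ⟨hε, hεl⟩
  exact integral_eq_mul_integral_div_cosh_aeps hε ((lt_div_iff₀' pi_pos).1 hεl).le
end
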